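/- Let A be a Schur ring over the infinite dihedral group D∞ such that Z = ⟨z⟩ is an A-subgroup and every basic set of A contained in Z is of the form {z^j, z^{−j}} for some integer j ≥ 0. Then the basic set of A containing s has at most two elements. -/

import Mathlib

/-!
Suppose the basic set `D ∋ s` had three elements. Since `⟨z⟩` is an `A`-set, `D` consists of
reflections `s_t := z^(-t) s`, say `D = {s_t : t ∈ I}`. Let `a = min I`, `c = max I`, `m = c - a`,
and `b ∈ I` strictly between. The basic set containing `z^m` is `C = {z^m, z^(-m)}`, and the
coefficient of `s_t` in `C̄ D̄` counts how many of `t ± m` lie in `I`: it is `1` at `t = a` and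
`0` at `t = b`. But `C̄ D̄ ∈ A` has constant coefficients on the basic set `D`.
-/

open scoped BigOperators

/-- A Schur ring over the group `G` with coefficients in the field `F`, presented by its
partition into finite nonempty basic sets. -/
structure SchurRing (F : Type) [Field F] [CharZero F] (G : Type) [Group G] [DecidableEq G] where
  /-- the basic sets -/
  parts : Set (Finset G)
  nonempty : ∀ C ∈ parts, C.Nonempty
  cover : ∀ g : G, ∃ C ∈ parts, g ∈ C
  eq_or_disjoint : ∀ C ∈ parts, ∀ D ∈ parts, C = D ∨ Disjoint C D
  one_mem : ({1} : Finset G) ∈ parts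
  inv_mem : ∀ C ∈ parts, C.image (·⁻¹) ∈ parts
  mul_mem : ∀ C ∈ parts, ∀ D ∈ parts, ∃ S : Finset (Finset G),
    (↑S : Set (Finset G)) ⊆ parts ∧ ∃ coef : Finset G → F,
      (∑ g ∈ C, MonoidAlgebra.single g (1 : F)) * (∑ g ∈ D, MonoidAlgebra.single g (1 : F))
        = ∑ E ∈ S, coef E • ∑ g ∈ E, MonoidAlgebra.single g (1 : F)

/-- A subset of `G` is an `A`-set if it is a union of basic sets of `A`. -/
def SchurRing.IsASet {F : Type} [Field F] [CharZero F] {G : Type} [Group G] [DecidableEq G]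
    (A : SchurRing F G) (X : Set G) : Prop :=
  ∃ 𝒮 : Set (Finset G), 𝒮 ⊆ A.parts ∧ X = ⋃ C ∈ 𝒮, (C : Set G)

/-- The infinite dihedral group, realized as `DihedralGroup 0`. -/
abbrev Dinf : Type := DihedralGroup 0

/-- The generator `z` of infinite order. -/
def zz : Dinf := DihedralGroup.r 1

/-- The reflection `s` of order two. -/
def ss : Dinf := DihedralGroup.sr 0

open DihedralGroup
open scoped Finset

noncomputable def simpleQuantity (F : Type*) [Semiring F] {G : Type*} (C : Finset G) :
    MonoidAlgebra F G :=
  ∑ g ∈ C, MonoidAlgebra.single g 1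

section SimpleQuantity

variable {F : Type*} [Semiring F] {G : Type*}

lemma coeff_simpleQuantity [DecidableEq G] (C : Finset G) (x : G) :
    (simpleQuantity F C).coeff x = if x ∈ C then 1 else 0 := by
  simp only [simpleQuantity, MonoidAlgebra.coeff_sum, MonoidAlgebra.coeff_single,
    Finset.sum_apply', Finsupp.single_apply]
  exact Finset.sum_ite_eq' C x fun _ => 1

lemma coeff_simpleQuantity_mul [Group G] (C : Finset G) (Y : MonoidAlgebra F G) (x : G) :
    (simpleQuantity F C * Y).coeff x = ∑ g ∈ C, Y.coeff (g⁻¹ * x) := by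
  simp only [simpleQuantity, Finset.sum_mul, MonoidAlgebra.coeff_sum, Finset.sum_apply',
    MonoidAlgebra.coeff_single_mul_apply, one_mul]

end SimpleQuantity

namespace SchurRing

variable {F : Type} [Field F] [CharZero F] {G : Type} [Group G] [DecidableEq G]
  (A : SchurRing F G)

lemma mem_iff_mem_of_mem_parts {C E : Finset G} (hC : C ∈ A.parts) (hE : E ∈ A.parts)
    {x y : G} (hx : x ∈ C) (hy : y ∈ C) : x ∈ E ↔ y ∈ E := by
  rcases A.eq_or_disjoint C hC E hE with rfl | hdisj
  · exact iff_of_true hx hy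
  · exact iff_of_false (Finset.disjoint_left.mp hdisj hx) (Finset.disjoint_left.mp hdisj hy)

lemma coeff_mul_eq_of_mem_parts {C D E : Finset G} (hC : C ∈ A.parts) (hD : D ∈ A.parts)
    (hE : E ∈ A.parts) {x y : G} (hx : x ∈ E) (hy : y ∈ E) :
    (simpleQuantity F C * simpleQuantity F D).coeff x =
      (simpleQuantity F C * simpleQuantity F D).coeff y := by
  obtain ⟨S, hS, coef, hCD⟩ := A.mul_mem C hC D hD
  change simpleQuantity F C * simpleQuantity F D = ∑ E' ∈ S, coef E' • simpleQuantity F E' at hCD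
  simp only [hCD, MonoidAlgebra.coeff_sum, Finset.sum_apply', MonoidAlgebra.coeff_smul_apply,
    coeff_simpleQuantity]
  exact Finset.sum_congr rfl fun E' hE' => by
    simp only [A.mem_iff_mem_of_mem_parts hE (hS hE') hx hy]

lemma coe_subset_of_isASet {X : Set G} (hX : A.IsASet X) {C : Finset G} (hC : C ∈ A.parts)
    {g : G} (hgC : g ∈ C) (hgX : g ∈ X) : (C : Set G) ⊆ X := by
  obtain ⟨𝒮, h𝒮, rfl⟩ := hX
  obtain ⟨E, hE𝒮, hgE⟩ := Set.mem_iUnion₂.mp hgX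
  obtain rfl : C = E := ((A.eq_or_disjoint C hC E (h𝒮 hE𝒮)).resolve_right
    (Finset.not_disjoint_iff.mpr ⟨g, hgC, hgE⟩))
  exact Set.subset_biUnion_of_mem hE𝒮

end SchurRing

lemma Int.exists_shift_of_two_lt_card {I : Finset ℤ} (hI : 2 < #I) :
    ∃ a ∈ I, ∃ b ∈ I, ∃ m : ℤ, 0 < m ∧ a + m ∈ I ∧ a - m ∉ I ∧ b + m ∉ I ∧ b - m ∉ I := by
  have hne : I.Nonempty := Finset.card_pos.mp (by omega)
  set a := I.min' hne
  set c := I.max' hne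
  obtain ⟨b, hbI, hb⟩ : ∃ b ∈ I, b ∉ ({a, c} : Finset ℤ) :=
    Finset.exists_mem_notMem_of_card_lt_card ((Finset.card_le_two).trans_lt hI)
  simp only [Finset.mem_insert, Finset.mem_singleton, not_or] at hb
  have hab : a < b := (I.min'_le b hbI).lt_of_ne (Ne.symm hb.1)
  have hbc : b < c := (I.le_max' b hbI).lt_of_ne hb.2
  have below : ∀ t < a, t ∉ I := fun t ht htI => (I.min'_le t htI).not_gt ht
  have above : ∀ t, c < t → t ∉ I := fun t ht htI => (I.le_max' t htI).not_gt ht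
  refine ⟨a, I.min'_mem hne, b, hbI, c - a, by omega, by simpa using I.max'_mem hne,
    below _ (by omega), above _ (by omega), below _ (by omega)⟩

-- `r` and `sr` take indices in `ZMod 0`, which is `ℤ` only up to unfolding; the lemmas below are
-- stated with integer indices so that `omega` and `ring` apply to them.
lemma zz_zpow (i : ℤ) : zz ^ i = r i := r_one_zpow i

lemma sr_injective : Function.Injective fun t : ℤ => (sr t : Dinf) := fun _ _ h => sr.inj h

lemma r_inv_mul_sr (m t : ℤ) : (r m : Dinf)⁻¹ * sr t = sr (t + m) :=
  congrArg sr (sub_neg_eq_add t m)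

lemma r_neg_inv_mul_sr (m t : ℤ) : (r (-m) : Dinf)⁻¹ * sr t = sr (t - m) :=
  congrArg sr (by ring : t - - -m = t - m)

lemma r_ne_r_neg {m : ℤ} (hm : m ≠ 0) : (r m : Dinf) ≠ r (-m) := fun h => by
  have : m = -m := r.inj h
  omega

lemma mem_zpowers_zz_iff {g : Dinf} : g ∈ Subgroup.zpowers zz ↔ ∃ i : ℤ, g = r i := by
  simp only [Subgroup.mem_zpowers_iff, zz_zpow, eq_comm]

lemma coeff_simpleQuantity_pair_mul_sr {F : Type*} [Semiring F] {m : ℤ} (hm : m ≠ 0)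
    (D : Finset Dinf) (t : ℤ) :
    (simpleQuantity F {r m, r (-m)} * simpleQuantity F D).coeff (sr t) =
      (if sr (t + m) ∈ D then 1 else 0) + (if sr (t - m) ∈ D then 1 else 0) := by
  rw [coeff_simpleQuantity_mul, Finset.sum_pair (r_ne_r_neg hm), r_inv_mul_sr, r_neg_inv_mul_sr,
    coeff_simpleQuantity, coeff_simpleQuantity]

variable {F : Type} [Field F] [CharZero F] (A : SchurRing F Dinf)

lemma pair_mem_parts (hZ : A.IsASet (Subgroup.zpowers zz : Subgroup Dinf))
    (hsym : ∀ C ∈ A.parts, (C : Set Dinf) ⊆ (Subgroup.zpowers zz : Subgroup Dinf) →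
      ∃ j : ℤ, 0 ≤ j ∧ C = {zz ^ j, zz ^ (-j)}) (m : ℤ) :
    ({r m, r (-m)} : Finset Dinf) ∈ A.parts := by
  obtain ⟨C, hC, hmC⟩ := A.cover (r m)
  have hCZ := A.coe_subset_of_isASet hZ hC hmC (mem_zpowers_zz_iff.mpr ⟨m, rfl⟩)
  obtain ⟨j, -, rfl⟩ := hsym C hC hCZ
  rw [zz_zpow, zz_zpow] at hC hmC
  simp only [Finset.mem_insert, Finset.mem_singleton] at hmC
  obtain rfl | rfl : m = j ∨ m = -j := hmC.imp r.inj r.inj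
  · exact hC
  · rwa [Finset.pair_comm, show -(-j) = j from neg_neg j]

lemma exists_sr_eq_of_mem_parts (hZ : A.IsASet (Subgroup.zpowers zz : Subgroup Dinf))
    {D : Finset Dinf} (hD : D ∈ A.parts) (hsD : ss ∈ D) {d : Dinf} (hd : d ∈ D) :
    ∃ t : ℤ, sr t = d := by
  rcases d with i | t
  · have hDZ := A.coe_subset_of_isASet hZ hD hd (mem_zpowers_zz_iff.mpr ⟨i, rfl⟩)
    obtain ⟨j, hj⟩ := mem_zpowers_zz_iff.mp (hDZ hsD)
    exact absurd hj (by simp [ss])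
  · exact ⟨t, rfl⟩

/-- If `⟨z⟩` is an `A`-subgroup and every basic set contained in `⟨z⟩` has the form
`{z^j, z^(-j)}` with `j ≥ 0`, then the basic set containing `s` has at most two elements. -/
theorem stmt_7 (F : Type) [Field F] [CharZero F] (A : SchurRing F Dinf)
    (hZ : A.IsASet (Subgroup.zpowers zz : Subgroup Dinf))
    (hsym : ∀ C ∈ A.parts, (C : Set Dinf) ⊆ (Subgroup.zpowers zz : Subgroup Dinf) →
      ∃ j : ℤ, 0 ≤ j ∧ C = {zz ^ j, zz ^ (-j)})
    (D : Finset Dinf) (hD : D ∈ A.parts) (hsD : ss ∈ D) :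
    D.card ≤ 2 := by
  by_contra! hcard
  set I : Finset ℤ := D.preimage (fun t : ℤ => sr t) sr_injective.injOn
  have hcardI : #I = #D := by
    classical
    rw [Finset.card_preimage, Finset.filter_true_of_mem]
    exact fun d hd => exists_sr_eq_of_mem_parts A hZ hD hsD hd
  obtain ⟨a, ha, b, hb, m, hm, ham, ham', hbm, hbm'⟩ :=
    Int.exists_shift_of_two_lt_card (hcardI ▸ hcard)
  have key := A.coeff_mul_eq_of_mem_parts (pair_mem_parts A hZ hsym m) hD hD
    (Finset.mem_preimage.mp ha) (Finset.mem_preimage.mp hb)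
  rw [coeff_simpleQuantity_pair_mul_sr hm.ne', coeff_simpleQuantity_pair_mul_sr hm.ne'] at key
  simp only [I, Finset.mem_preimage] at ham ham' hbm hbm'
  simp [ham, ham', hbm, hbm'] at key
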